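/- If a circle is partitioned into n ≥ 3 arcs of equal length by n equally spaced points, then two side disks intersect if and only if the corresponding arcs are adjacent; hence the number of disjoint pairs of side disks equals n(n−3)/2. -/

import Mathlib

/-!
The side disk of an arc of angle `2π/n` on a circle of radius `r` has radius `2r sin(π/2n)`,
and the centres of the side disks of arcs `i < j` are at distance `2r sin(kπ/n)`, `k = j - i`.
Two equal closed disks meet iff their centres are at most two radii apart, i.e. iff
`sin(kπ/n) ≤ 2 sin(π/2n)`. For `k = 1` and `k = n - 1` this is `sin 2x ≤ 2 sin x`; for
`2 ≤ k ≤ n - 2` Jordan's inequality gives `sin(kπ/n) ≥ 4/n > π/n > 2 sin(π/2n)`.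
Of the `n(n-1)/2` pairs of arcs exactly `n` are adjacent, leaving `n(n-3)/2` disjoint pairs.
-/

open EuclideanGeometry Metric Real

/-- The point at angle `θ` on the circle centered at `O` with radius `r`
in the Euclidean plane. -/
noncomputable def circlePt (O : EuclideanSpace ℝ (Fin 2)) (r θ : ℝ) :
    EuclideanSpace ℝ (Fin 2) :=
  O + r • (WithLp.equiv 2 (Fin 2 → ℝ)).symm ![Real.cos θ, Real.sin θ]

/-- The side disk of the arc from angle `a` to angle `b` (traversed in increasing angle)
of the circle centered at `O` with radius `r`: the closed disk centered at the midpoint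
of the arc whose boundary passes through the two endpoints of the arc. -/
noncomputable def sideDisk (O : EuclideanSpace ℝ (Fin 2)) (r a b : ℝ) :
    Set (EuclideanSpace ℝ (Fin 2)) :=
  Metric.closedBall (circlePt O r ((a + b) / 2))
    (dist (circlePt O r ((a + b) / 2)) (circlePt O r a))

theorem dist_circlePt (O : EuclideanSpace ℝ (Fin 2)) (r a b : ℝ) :
    dist (circlePt O r a) (circlePt O r b) = 2 * |r| * |sin ((a - b) / 2)| := by
  have half_angle : (cos a - cos b) ^ 2 + (sin a - sin b) ^ 2 = (2 * sin ((a - b) / 2)) ^ 2 := by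
    have h := sin_sq_eq_half_sub ((a - b) / 2)
    rw [show 2 * ((a - b) / 2) = a - b by ring, cos_sub] at h
    nlinarith [sin_sq_add_cos_sq a, sin_sq_add_cos_sq b, sin_sq_add_cos_sq ((a - b) / 2)]
  rw [EuclideanSpace.dist_eq, Fin.sum_univ_two]
  simp only [circlePt, PiLp.add_apply, PiLp.smul_apply, smul_eq_mul, Real.dist_eq, sq_abs,
    WithLp.equiv_symm_apply, Matrix.cons_val_zero, Matrix.cons_val_one, Matrix.cons_val_fin_one,
    add_sub_add_left_eq_sub]
  rw [show (r * cos a - r * cos b) ^ 2 + (r * sin a - r * sin b) ^ 2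
      = (r * (2 * sin ((a - b) / 2))) ^ 2 by rw [mul_pow, ← half_angle]; ring,
    sqrt_sq_eq_abs, abs_mul, abs_mul, abs_two, mul_left_comm, ← mul_assoc]

theorem closedBall_inter_closedBall_nonempty_iff {E : Type*} [NormedAddCommGroup E]
    [NormedSpace ℝ E] {x y : E} {ρ : ℝ} (hρ : 0 ≤ ρ) :
    (closedBall x ρ ∩ closedBall y ρ).Nonempty ↔ dist x y ≤ 2 * ρ := by
  rw [← Set.not_disjoint_iff_nonempty_inter, disjoint_closedBall_closedBall_iff hρ hρ, two_mul,
    not_lt]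

theorem sideDisk_eq_closedBall (O : EuclideanSpace ℝ (Fin 2)) (r a b : ℝ) :
    sideDisk O r a b =
      closedBall (circlePt O r ((a + b) / 2)) (2 * |r| * |sin ((b - a) / 4)|) := by
  rw [sideDisk, dist_circlePt]
  ring_nf

theorem sideDisk_inter_sideDisk_nonempty_iff (O : EuclideanSpace ℝ (Fin 2)) {r : ℝ} (hr : r ≠ 0)
    (a b ℓ : ℝ) :
    (sideDisk O r a (a + ℓ) ∩ sideDisk O r b (b + ℓ)).Nonempty ↔
      |sin ((a - b) / 2)| ≤ 2 * |sin (ℓ / 4)| := by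
  rw [sideDisk_eq_closedBall, sideDisk_eq_closedBall, add_sub_cancel_left, add_sub_cancel_left,
    closedBall_inter_closedBall_nonempty_iff (by positivity), dist_circlePt,
    show ((a + (a + ℓ)) / 2 - (b + (b + ℓ)) / 2) / 2 = (a - b) / 2 by ring,
    mul_left_comm 2 (2 * |r|), mul_le_mul_iff_right₀ (by positivity)]

theorem two_div_pi_mul_le_sin {a x : ℝ} (ha : 0 ≤ a) (hax : a ≤ x) (hxa : x ≤ π - a) :
    2 / π * a ≤ sin x := by
  rcases le_total x (π / 2) with hx | hx
  · exact (mul_le_mul_of_nonneg_left hax (by positivity)).trans (mul_le_sin (ha.trans hax) hx)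
  · rw [← sin_pi_sub]
    exact (mul_le_mul_of_nonneg_left (by linarith) (by positivity)).trans
      (mul_le_sin (by linarith) (by linarith))

theorem abs_sin_nat_mul_pi_div_le_iff {n k : ℕ} (hn : 3 ≤ n) (hk : 1 ≤ k) (hkn : k < n) :
    |sin (k * π / n)| ≤ 2 * |sin (π / (2 * n))| ↔ k = 1 ∨ k = n - 1 := by
  have hn' : (3 : ℝ) ≤ n := by exact_mod_cast hn
  have hsin_half : 0 ≤ sin (π / (2 * n)) :=
    sin_nonneg_of_nonneg_of_le_pi (by positivity) (div_le_self pi_pos.le (by linarith))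
  have hsin : 0 ≤ sin (k * π / n) := sin_nonneg_of_nonneg_of_le_pi (by positivity)
    (by rw [div_le_iff₀ (by positivity), mul_comm π]; gcongr)
  rw [abs_of_nonneg hsin, abs_of_nonneg hsin_half]
  have hsin_one : sin (1 * π / n) ≤ 2 * sin (π / (2 * n)) := by
    rw [show 1 * π / n = 2 * (π / (2 * n)) by field_simp, sin_two_mul, mul_assoc]
    exact mul_le_mul_of_nonneg_left
      (mul_le_of_le_one_right hsin_half (cos_le_one _)) zero_le_two
  constructor
  · intro h
    by_contra! hk'
    have hfar : 4 / n ≤ sin (k * π / n) := by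
      have hk2 : (2 : ℝ) ≤ k := by exact_mod_cast (by omega : 2 ≤ k)
      have hkn2 : (k : ℝ) + 2 ≤ n := by exact_mod_cast (by omega : k + 2 ≤ n)
      convert two_div_pi_mul_le_sin (a := 2 * π / n) (by positivity) ?_ ?_ using 1
      · field_simp; ring
      · gcongr
      · rw [show π - 2 * π / n = (n - 2) * π / n by field_simp]
        gcongr
        linarith
    have hnear : 2 * sin (π / (2 * n)) < 4 / n := by
      calc 2 * sin (π / (2 * n)) < 2 * (π / (2 * n)) := by gcongr; exact sin_lt (by positivity)
        _ = π / n := by field_simp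
        _ < 4 / n := by gcongr; linarith [pi_lt_d2]
    linarith
  · rintro (rfl | rfl)
    · exact_mod_cast hsin_one
    · rwa [Nat.cast_sub (by omega), Nat.cast_one, sub_mul, sub_div,
        mul_div_cancel_left₀ _ (by positivity), sin_pi_sub]

theorem ncard_nonadjacent_pairs {n : ℕ} (hn : 3 ≤ n) :
    {p : ℕ × ℕ | p.1 < p.2 ∧ p.2 < n ∧ ¬(p.2 = p.1 + 1 ∨ (p.1 = 0 ∧ p.2 = n - 1))}.ncard =
      n * (n - 3) / 2 := by
  set adjacent : Finset (ℕ × ℕ) :=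
    insert (0, n - 1) ((Finset.range (n - 1)).image fun i => (i, i + 1))
  have hcard_adjacent : adjacent.card = n := by
    have hwrap : (0, n - 1) ∉ (Finset.range (n - 1)).image fun i => (i, i + 1) := by
      simp only [Finset.mem_image, Finset.mem_range, Prod.mk.injEq, ↓existsAndEq]
      omega
    rw [Finset.card_insert_of_notMem hwrap,
      Finset.card_image_of_injective _ fun i j h => (Prod.ext_iff.1 h).1, Finset.card_range]
    omega
  have hsubset : adjacent ⊆ {p ∈ Finset.range n ×ˢ Finset.range n | p.1 < p.2} := by
    rintro ⟨i, j⟩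
    simp only [adjacent, Finset.mem_insert, Finset.mem_image, Finset.mem_filter, Finset.mem_product,
      Finset.mem_range, Prod.mk.injEq, ↓existsAndEq, true_and]
    omega
  have hset : {p : ℕ × ℕ | p.1 < p.2 ∧ p.2 < n ∧ ¬(p.2 = p.1 + 1 ∨ (p.1 = 0 ∧ p.2 = n - 1))} =
      ↑({p ∈ Finset.range n ×ˢ Finset.range n | p.1 < p.2} \ adjacent) := by
    ext ⟨i, j⟩
    simp only [adjacent, Set.mem_ofPred_eq, Finset.coe_sdiff, Finset.coe_filter, Finset.coe_insert,
      Finset.coe_image, Finset.mem_product, Finset.mem_range, Finset.coe_range, Set.mem_sdiff,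
      Set.mem_insert_iff, Set.mem_image, Set.mem_Iio, Prod.mk.injEq, ↓existsAndEq, true_and]
    omega
  rw [hset, Set.ncard_coe_finset, Finset.card_sdiff_of_subset hsubset,
    Finset.card_product_filter_lt, Finset.card_range, hcard_adjacent, Nat.choose_two_right,
    show n * (n - 1) = n * (n - 3) + n * 2 by rw [← mul_add]; congr 1; omega,
    Nat.add_mul_div_right _ _ two_pos, Nat.add_sub_cancel]

theorem sideDisk_inter_nonempty_iff_adjacent (O : EuclideanSpace ℝ (Fin 2)) {r : ℝ} (hr : r ≠ 0)
    {n : ℕ} (hn : 3 ≤ n) {θ : ℕ → ℝ} (hθ : ∀ m : ℕ, θ m = m * (2 * π / n))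
    {i j : ℕ} (hij : i < j) (hjn : j < n) :
    (sideDisk O r (θ i) (θ (i + 1)) ∩ sideDisk O r (θ j) (θ (j + 1))).Nonempty ↔
      (j = i + 1 ∨ (i = 0 ∧ j = n - 1)) := by
  have hstep : ∀ m, θ (m + 1) = θ m + 2 * π / n := by
    intro m
    rw [hθ, hθ]
    push_cast
    ring
  have hangle : (θ i - θ j) / 2 = -((j - i : ℕ) * π / n) := by
    rw [hθ, hθ, Nat.cast_sub hij.le]
    ring
  rw [hstep, hstep, sideDisk_inter_sideDisk_nonempty_iff O hr, hangle, sin_neg, abs_neg,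
    show 2 * π / n / 4 = π / (2 * n) by ring,
    abs_sin_nat_mul_pi_div_le_iff hn (by omega) (by omega)]
  omega

/-- For a circle partitioned into `n ≥ 3` equal arcs by equally spaced points, two side
disks intersect iff the arcs are adjacent; hence the number of disjoint pairs equals
`n(n-3)/2`. -/
theorem stmt_12 (O : EuclideanSpace ℝ (Fin 2)) (r : ℝ) (hr : 0 < r)
    (n : ℕ) (hn : 3 ≤ n) (θ : ℕ → ℝ) (hθ : ∀ m : ℕ, θ m = m * (2 * π / n)) :
    (∀ i j : ℕ, i < j → j < n →
      ((sideDisk O r (θ i) (θ (i + 1)) ∩ sideDisk O r (θ j) (θ (j + 1))).Nonempty ↔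
        (j = i + 1 ∨ (i = 0 ∧ j = n - 1)))) ∧
    {p : ℕ × ℕ | p.1 < p.2 ∧ p.2 < n ∧
        sideDisk O r (θ p.1) (θ (p.1 + 1)) ∩ sideDisk O r (θ p.2) (θ (p.2 + 1)) = ∅}.ncard =
      n * (n - 3) / 2 := by
  have hadj := fun i j (hij : i < j) (hjn : j < n) =>
    sideDisk_inter_nonempty_iff_adjacent O hr.ne' hn hθ hij hjn
  refine ⟨hadj, ?_⟩
  rw [← ncard_nonadjacent_pairs hn]
  congr 1
  ext ⟨i, j⟩
  simp only [Set.mem_ofPred_eq, ← Set.not_nonempty_iff_eq_empty]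
  exact and_congr_right fun hij => and_congr_right fun hjn => not_congr (hadj i j hij hjn)
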